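/- Fix t > 0, σ > 0, x, ζ ∈ ℝ and set y = (x - ζ - σ²t/2)/(σ√(2t)). For all integers m ≥ 0 and n ≥ 2, the ratio of Black-Scholes derivatives satisfies ∂_x^m(∂_x^n - ∂_x) u^BS(t,x,σ) / ((∂²_x - ∂_x) u^BS(t,x,σ)) = Σ_{i=2}^{n} (-1/(σ√(2t)))^{m+i-2} H_{m+i-2}(y), where H_k is the k-th Hermite polynomial. -/

import Mathlib

open MeasureTheory

/-- Standard normal cumulative distribution function. -/
noncomputable def stdNormalCDF (y : ℝ) : ℝ :=
  ∫ s in Set.Iic y, Real.exp (-s ^ 2 / 2) / Real.sqrt (2 * Real.pi)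

/-- Black-Scholes call price `u^BS(t,x,σ)` with log-strike `ζ`. -/
noncomputable def uBS (ζ t x σ : ℝ) : ℝ :=
  Real.exp x * stdNormalCDF ((x - ζ + σ ^ 2 * t / 2) / (σ * Real.sqrt t)) -
    Real.exp ζ * stdNormalCDF ((x - ζ - σ ^ 2 * t / 2) / (σ * Real.sqrt t))

/-- The `n`-th (physicists') Hermite polynomial via the Rodrigues formula. -/
noncomputable def hermiteH (n : ℕ) (y : ℝ) : ℝ :=
  (-1) ^ n * Real.exp (y ^ 2) * iteratedDeriv n (fun s => Real.exp (-s ^ 2)) y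

/-!
Write `s = σ√t`. The identity `eˣ φ(d₊) = e^ζ φ(d₋)` gives `∂ₓu = eˣ N(d₊)` and
`∂ₓ(eˣ N(d₊)) = eˣ N(d₊) + g`, where `g = (∂ₓ² - ∂ₓ)u = C exp(-y²)` is a Gaussian in
`y = (x - ζ - s²/2)/(s√2)`. Hence `∂ₓⁿu - ∂ₓu = ∑_{j ≤ n-2} ∂ₓʲ g`, and the Rodrigues
formula gives `∂ₓᵖ g = (-1/(s√2))ᵖ Hₚ(y) g`.
-/

open Real Finset
open scoped ContDiff

section IteratedDeriv

variable {𝕜 F : Type*} [NontriviallyNormedField 𝕜] [NormedAddCommGroup F] [NormedSpace 𝕜 F]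

theorem iteratedDeriv_iteratedDeriv (m j : ℕ) (f : 𝕜 → F) :
    iteratedDeriv m (iteratedDeriv j f) = iteratedDeriv (m + j) f := by
  simp only [iteratedDeriv_eq_iterate, Function.iterate_add_apply]

theorem ContDiff.contDiff_iteratedDeriv {f : 𝕜 → F} (hf : ContDiff 𝕜 ∞ f) (j : ℕ) :
    ContDiff 𝕜 ∞ (iteratedDeriv j f) := by
  rw [iteratedDeriv_eq_iterate]
  exact hf.iterate_deriv j

theorem iteratedDeriv_succ_eq_add_sum {u v g : 𝕜 → F} (hu : deriv u = v)
    (hv : ∀ x, HasDerivAt v (v x + g x) x) (hg : ContDiff 𝕜 ∞ g) (k : ℕ) :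
    iteratedDeriv (k + 1) u = fun x => v x + ∑ j ∈ range k, iteratedDeriv j g x := by
  induction k with
  | zero =>
    rw [zero_add, iteratedDeriv_one, hu]
    simp
  | succ k ih =>
    ext x
    have hsum : HasDerivAt (fun y => ∑ j ∈ range k, iteratedDeriv j g y)
        (∑ j ∈ range k, iteratedDeriv (j + 1) g x) x := by
      refine HasDerivAt.fun_sum fun j _ => ?_
      rw [iteratedDeriv_succ]
      exact ((hg.contDiff_iteratedDeriv j).differentiable (by simp) x).hasDerivAt
    rw [iteratedDeriv_succ, ih, ((hv x).fun_add hsum).deriv, sum_range_succ', iteratedDeriv_zero]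
    abel

theorem iteratedDeriv_iteratedDeriv_sub_deriv {u v g : 𝕜 → F} (hu : deriv u = v)
    (hv : ∀ x, HasDerivAt v (v x + g x) x) (hg : ContDiff 𝕜 ∞ g) (m k : ℕ) (x : 𝕜) :
    iteratedDeriv m (fun y => iteratedDeriv (k + 1) u y - deriv u y) x =
      ∑ j ∈ range k, iteratedDeriv (m + j) g x := by
  have hsum : (fun y => iteratedDeriv (k + 1) u y - deriv u y) =
      fun y => ∑ j ∈ range k, iteratedDeriv j g y := by
    ext y
    rw [iteratedDeriv_succ_eq_add_sum hu hv hg, hu, add_sub_cancel_left]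
  have hgj (j : ℕ) : ContDiffAt 𝕜 m (iteratedDeriv j g) x :=
    ((hg.contDiff_iteratedDeriv j).of_le (by exact_mod_cast le_top)).contDiffAt
  rw [hsum, iteratedDeriv_fun_sum fun j _ => hgj j]
  simp only [iteratedDeriv_iteratedDeriv]

end IteratedDeriv

theorem iteratedDeriv_exp_neg_sq (p : ℕ) (y : ℝ) :
    iteratedDeriv p (fun s => exp (-s ^ 2)) y = (-1) ^ p * hermiteH p y * exp (-y ^ 2) := by
  have hexp : exp (y ^ 2) * exp (-y ^ 2) = 1 := by rw [← exp_add, add_neg_cancel, exp_zero]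
  have hsign : ((-1 : ℝ) ^ p) * (-1) ^ p = 1 := by rw [← mul_pow]; norm_num
  unfold hermiteH
  linear_combination (-((-1) ^ p * (-1) ^ p * iteratedDeriv p (fun s => exp (-s ^ 2)) y)) * hexp -
    iteratedDeriv p (fun s => exp (-s ^ 2)) y * hsign

theorem iteratedDeriv_exp_neg_sq_div (a d : ℝ) (p : ℕ) (x : ℝ) :
    iteratedDeriv p (fun x => exp (-((x - a) / d) ^ 2)) x =
      (-(1 / d)) ^ p * hermiteH p ((x - a) / d) * exp (-((x - a) / d) ^ 2) := by
  have hsmooth : ContDiff ℝ p (fun s => exp (-s ^ 2)) := by fun_prop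
  simp only [div_eq_inv_mul (_ - a)]
  rw [iteratedDeriv_comp_sub_const p (fun z => exp (-(d⁻¹ * z) ^ 2)) a,
    iteratedDeriv_comp_const_mul hsmooth d⁻¹]
  dsimp only
  rw [iteratedDeriv_exp_neg_sq]
  ring

noncomputable def stdNormalPDF (y : ℝ) : ℝ := exp (-y ^ 2 / 2) / √(2 * π)

theorem integrable_stdNormalPDF : Integrable stdNormalPDF := by
  have h : stdNormalPDF = fun y => exp (-(1 / 2) * y ^ 2) / √(2 * π) := by
    ext y; unfold stdNormalPDF; ring_nf
  rw [h]
  exact (integrable_exp_neg_mul_sq (by norm_num)).div_const _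

theorem continuous_stdNormalPDF : Continuous stdNormalPDF := by
  unfold stdNormalPDF; fun_prop

theorem hasDerivAt_stdNormalCDF (y : ℝ) : HasDerivAt stdNormalCDF (stdNormalPDF y) y := by
  have hsplit : stdNormalCDF = fun z => stdNormalCDF 0 + ∫ s in (0 : ℝ)..z, stdNormalPDF s := by
    ext z
    rw [← intervalIntegral.integral_Iic_sub_Iic integrable_stdNormalPDF.integrableOn
      integrable_stdNormalPDF.integrableOn]
    unfold stdNormalCDF stdNormalPDF
    ring
  rw [hsplit]
  exact (intervalIntegral.integral_hasDerivAt_right integrable_stdNormalPDF.intervalIntegrable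
    (continuous_stdNormalPDF.stronglyMeasurableAtFilter _ _)
    continuous_stdNormalPDF.continuousAt).const_add _

noncomputable def callPrice (ζ s x : ℝ) : ℝ :=
  exp x * stdNormalCDF ((x - ζ) / s + s / 2) - exp ζ * stdNormalCDF ((x - ζ) / s - s / 2)

noncomputable def callDelta (ζ s x : ℝ) : ℝ := exp x * stdNormalCDF ((x - ζ) / s + s / 2)

theorem uBS_eq_callPrice (ζ t x σ : ℝ) (ht : 0 ≤ t) :
    uBS ζ t x σ = callPrice ζ (σ * √t) x := by
  have hs : σ ^ 2 * t = (σ * √t) ^ 2 := by rw [mul_pow, sq_sqrt ht]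
  have hdiv : (σ * √t) ^ 2 / 2 / (σ * √t) = σ * √t / 2 := by
    rcases eq_or_ne (σ * √t) 0 with h | h
    · simp [h]
    · field_simp
  simp only [uBS, callPrice, hs, add_div, sub_div, hdiv]

theorem hasDerivAt_sub_div_add (a s c x : ℝ) :
    HasDerivAt (fun x => (x - a) / s + c) (1 / s) x :=
  (((hasDerivAt_id x).sub_const a).div_const s).add_const c

section CallPrice

variable {ζ s : ℝ}

theorem exp_mul_stdNormalPDF_div_add_half (hs : s ≠ 0) (x : ℝ) :
    exp x * stdNormalPDF ((x - ζ) / s + s / 2) = exp ζ * stdNormalPDF ((x - ζ) / s - s / 2) := by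
  simp only [stdNormalPDF, mul_div_assoc', ← exp_add]
  congr 2
  field_simp
  ring

theorem exp_mul_stdNormalPDF_div_sub_half_div (hs : s ≠ 0) (x : ℝ) :
    exp ζ * stdNormalPDF ((x - ζ) / s - s / 2) / s =
      exp ζ / (s * √(2 * π)) * exp (-((x - (ζ + s ^ 2 / 2)) / (s * √2)) ^ 2) := by
  have h2 : √2 ^ 2 = 2 := sq_sqrt zero_le_two
  simp only [stdNormalPDF]
  field_simp
  congr 2
  field_simp
  rw [h2]
  ring

theorem hasDerivAt_callPrice (hs : s ≠ 0) (x : ℝ) :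
    HasDerivAt (callPrice ζ s) (callDelta ζ s x) x := by
  have hplus := (hasDerivAt_stdNormalCDF _).comp x (hasDerivAt_sub_div_add ζ s (s / 2) x)
  have hminus := (hasDerivAt_stdNormalCDF _).comp x (hasDerivAt_sub_div_add ζ s (-(s / 2)) x)
  simp only [← sub_eq_add_neg] at hminus
  refine (((hasDerivAt_exp x).mul hplus).sub (hminus.const_mul (exp ζ))).congr_deriv ?_
  simp only [callDelta, Function.comp_apply]
  linear_combination (1 / s) * exp_mul_stdNormalPDF_div_add_half (ζ := ζ) hs x

theorem hasDerivAt_callDelta (hs : s ≠ 0) (x : ℝ) :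
    HasDerivAt (callDelta ζ s) (callDelta ζ s x +
      exp ζ / (s * √(2 * π)) * exp (-((x - (ζ + s ^ 2 / 2)) / (s * √2)) ^ 2)) x := by
  have hplus := (hasDerivAt_stdNormalCDF _).comp x (hasDerivAt_sub_div_add ζ s (s / 2) x)
  refine ((hasDerivAt_exp x).mul hplus).congr_deriv ?_
  simp only [callDelta, Function.comp_apply]
  rw [← exp_mul_stdNormalPDF_div_sub_half_div hs]
  linear_combination (1 / s) * exp_mul_stdNormalPDF_div_add_half (ζ := ζ) hs x

theorem callPrice_ratio_eq_sum_hermiteH (hs : s ≠ 0) (m k : ℕ) (x : ℝ) :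
    iteratedDeriv m
        (fun y => iteratedDeriv (k + 1) (callPrice ζ s) y - deriv (callPrice ζ s) y) x /
        (iteratedDeriv 2 (callPrice ζ s) x - deriv (callPrice ζ s) x) =
      ∑ j ∈ range k, (-(1 / (s * √2))) ^ (m + j) *
        hermiteH (m + j) ((x - (ζ + s ^ 2 / 2)) / (s * √2)) := by
  have hu : deriv (callPrice ζ s) = callDelta ζ s :=
    funext fun x => (hasDerivAt_callPrice hs x).deriv
  have hg : ContDiff ℝ ∞ fun x =>
      exp ζ / (s * √(2 * π)) * exp (-((x - (ζ + s ^ 2 / 2)) / (s * √2)) ^ 2) := by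
    fun_prop
  have hden := iteratedDeriv_iteratedDeriv_sub_deriv hu (hasDerivAt_callDelta hs) hg 0 1 x
  simp only [iteratedDeriv_zero, zero_add, range_one, sum_singleton] at hden
  rw [iteratedDeriv_iteratedDeriv_sub_deriv hu (hasDerivAt_callDelta hs) hg, hden, sum_div]
  refine sum_congr rfl fun j _ => ?_
  rw [iteratedDeriv_const_mul_field, iteratedDeriv_exp_neg_sq_div]
  have : exp ζ / (s * √(2 * π)) ≠ 0 := by positivity
  field_simp

end CallPrice

theorem ratio_lemma_hermite (ζ t x σ : ℝ) (ht : 0 < t) (hσ : 0 < σ)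
    (m n : ℕ) (hn : 2 ≤ n) :
    iteratedDeriv m
        (fun x' => iteratedDeriv n (fun x'' => uBS ζ t x'' σ) x' -
          deriv (fun x'' => uBS ζ t x'' σ) x') x /
      (iteratedDeriv 2 (fun x' => uBS ζ t x' σ) x - deriv (fun x' => uBS ζ t x' σ) x) =
      ∑ i ∈ Finset.Icc 2 n,
        (-(1 / (σ * Real.sqrt (2 * t)))) ^ (m + i - 2) *
          hermiteH (m + i - 2) ((x - ζ - σ ^ 2 * t / 2) / (σ * Real.sqrt (2 * t))) := by
  obtain ⟨k, rfl⟩ : ∃ k, n = k + 1 + 1 := ⟨n - 2, by omega⟩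
  have hs : σ * √t ≠ 0 := by positivity
  have hu : (fun x' => uBS ζ t x' σ) = callPrice ζ (σ * √t) :=
    funext fun x' => uBS_eq_callPrice ζ t x' σ ht.le
  have hd : σ * √(2 * t) = σ * √t * √2 := by rw [sqrt_mul zero_le_two]; ring
  have hy : x - ζ - σ ^ 2 * t / 2 = x - (ζ + (σ * √t) ^ 2 / 2) := by
    rw [mul_pow, sq_sqrt ht.le]; ring
  rw [hu, callPrice_ratio_eq_sum_hermiteH hs, hd, hy, ← Ico_add_one_right_eq_Icc,
    sum_Ico_eq_sum_range, show k + 1 + 1 + 1 - 2 = k + 1 by omega]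
  refine sum_congr rfl fun j _ => ?_
  rw [show m + (2 + j) - 2 = m + j by omega]
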